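/- arXiv:1908.05702 — 3 statements merged into one kernel-verified Lean document; each statement's English description precedes it below -/
import Mathlib

section
/- Let Φ : Mₙ(ℂ) → Mₙ(ℂ) be a Hermiticity-preserving linear map (Φ(Xᴴ) = Φ(X)ᴴ for all X) such that Y := Φ(I) is positive definite. If Φ satisfies the generalized Kadison–Schwarz inequality Φ(X Xᴴ) − Φ(X) Y⁻¹ Φ(Xᴴ) ⪰ 0 for all X ∈ Mₙ(ℂ), then Φ also satisfies Φ(Xᴴ X) − Φ(Xᴴ) X − Xᴴ Φ(X) + Xᴴ Y X ⪰ 0 for all X ∈ Mₙ(ℂ). -/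
open Matrix
open scoped ComplexOrder

/-- If a Hermiticity-preserving linear map `Φ` on `Mₙ(ℂ)` with `Y := Φ(I)`
positive definite satisfies the generalized Kadison–Schwarz inequality
`Φ(X Xᴴ) − Φ(X) Y⁻¹ Φ(Xᴴ) ⪰ 0` for all `X`, then
`Φ(Xᴴ X) − Φ(Xᴴ) X − Xᴴ Φ(X) + Xᴴ Y X ⪰ 0` for all `X`. -/
theorem stmt_0 (n : ℕ)
    (Φ : Matrix (Fin n) (Fin n) ℂ →ₗ[ℂ] Matrix (Fin n) (Fin n) ℂ)
    (hherm : ∀ X : Matrix (Fin n) (Fin n) ℂ, Φ Xᴴ = (Φ X)ᴴ)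
    (hY : (Φ 1).PosDef)
    (hKS : ∀ X : Matrix (Fin n) (Fin n) ℂ,
      (Φ (X * Xᴴ) - Φ X * (Φ 1)⁻¹ * Φ Xᴴ).PosSemidef) :
    ∀ X : Matrix (Fin n) (Fin n) ℂ,
      (Φ (Xᴴ * X) - Φ Xᴴ * X - Xᴴ * Φ X + Xᴴ * Φ 1 * X).PosSemidef := by
  intro X
  set Y := Φ 1 with hYdef
  have hYinv : IsUnit Y.det := isUnit_iff_ne_zero.mpr hY.det_pos.ne'
  have hinv_herm : Y⁻¹ᴴ = Y⁻¹ := hY.isHermitian.inv.eq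
  set C : Matrix (Fin n) (Fin n) ℂ := Y⁻¹ * Φ X - X with hC
  have h1 := hKS Xᴴ
  rw [conjTranspose_conjTranspose] at h1
  have h2 : (Cᴴ * Y * C).PosSemidef :=
    hY.posSemidef.conjTranspose_mul_mul_same C
  have hCH : Cᴴ = Φ Xᴴ * Y⁻¹ - Xᴴ := by
    rw [hC, conjTranspose_sub, conjTranspose_mul, hinv_herm, ← hherm]
  have key : Φ (Xᴴ * X) - Φ Xᴴ * X - Xᴴ * Φ X + Xᴴ * Y * X
      = (Φ (Xᴴ * X) - Φ Xᴴ * Y⁻¹ * Φ X) + Cᴴ * Y * C := by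
    rw [hCH, hC]
    have hYY : Y * Y⁻¹ = 1 := Matrix.mul_nonsing_inv Y hYinv
    have hYY' : Y⁻¹ * Y = 1 := Matrix.nonsing_inv_mul Y hYinv
    simp only [Matrix.sub_mul, Matrix.mul_sub, Matrix.mul_assoc]
    rw [show Y * (Y⁻¹ * Φ X) = Φ X from by rw [← Matrix.mul_assoc, hYY, Matrix.one_mul],
      show Y⁻¹ * (Y * X) = X from by rw [← Matrix.mul_assoc, hYY', Matrix.one_mul]]
    abel
  rw [key]
  exact h1.add h2
end

section
/- Let p₁, p₂, p₃ be real numbers with |pₖ| ≤ 1 for k = 1, 2, 3 and p₁² + p₂² + p₃² ≤ 1 + 2·p₁·p₂·p₃. Then the map Φ_p satisfies the Kadison–Schwarz inequality: Φ_p(X Xᴴ) − Φ_p(X) Φ_p(Xᴴ) is positive semidefinite for every X ∈ M₂(ℂ). -/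
/-
Write `X = x₀ I + Σₖ xₖ σₖ` with `xₖ = uₖ + i wₖ`, `uₖ, wₖ` real. Since `Φ_p` is unital the defect
`Φ_p(XXᴴ) - Φ_p(X) Φ_p(X)ᴴ` ignores `x₀`, and the Pauli multiplication table turns it into the
Bloch-form matrix `c I + Σₗ vₗ σₗ` with `c = Σₖ (1 - pₖ²) |xₖ|²` and
`vₗ = 2 (pₗ - pₘ pₙ) (u × w)ₗ` (`l, m, n` cyclic). Such a matrix is positive semidefinite as soon
as `|v| ≤ c`. The hypothesis on `p` is exactly `(pₗ - pₘ pₙ)² ≤ (1 - pₘ²)(1 - pₙ²)` for each `l`,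
so with `qₖ = 1 - pₖ²` the weighted Lagrange identity gives
`|v|² ≤ 4 ((Σ q u²)(Σ q w²) - (Σ q u w)²) ≤ (Σ q u² + Σ q w²)² = c²`.
-/

open Matrix
open scoped ComplexOrder

/-- The three Pauli matrices in `M₂(ℂ)`. -/
def pauli : Fin 3 → Matrix (Fin 2) (Fin 2) ℂ
  | 0 => !![0, 1; 1, 0]
  | 1 => !![0, -Complex.I; Complex.I, 0]
  | 2 => !![1, 0; 0, -1]

/-- The unital linear map `Φ_p` with `Φ_p(I) = I` and `Φ_p(σₖ) = pₖ σₖ`, given by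
`Φ_p(X) = ½ Tr(X) I + ½ Σₖ pₖ Tr(σₖ X) σₖ`. -/
noncomputable def PhiP (p : Fin 3 → ℝ) (X : Matrix (Fin 2) (Fin 2) ℂ) :
    Matrix (Fin 2) (Fin 2) ℂ :=
  (1 / 2 : ℂ) • (X.trace • (1 : Matrix (Fin 2) (Fin 2) ℂ)
    + ∑ k, ((p k : ℂ) * (pauli k * X).trace) • pauli k)

lemma posSemidef_of_fin_two {M : Matrix (Fin 2) (Fin 2) ℂ} (hM : M.IsHermitian)
    (h00 : 0 ≤ M 0 0) (h11 : 0 ≤ M 1 1) (hdet : 0 ≤ M.det) : M.PosSemidef := by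
  refine .of_dotProduct_mulVec_nonneg hM fun x => ?_
  have h10 : M 1 0 = star (M 0 1) := (hM.apply 1 0).symm
  rw [Complex.nonneg_iff] at h00 h11 hdet ⊢
  rw [det_fin_two, h10] at hdet
  simp only [dotProduct, mulVec, Fin.sum_univ_two, h10]
  simp only [Complex.mul_re, Complex.mul_im, Complex.add_re, Complex.add_im, Complex.sub_re,
    Complex.star_def, Complex.conj_re, Complex.conj_im, Pi.star_apply] at hdet ⊢
  rw [← h00.2, ← h11.2] at hdet ⊢
  refine ⟨?_, by ring⟩
  obtain ⟨hα, -⟩ := h00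
  obtain ⟨hδ, -⟩ := h11
  obtain ⟨hdet, -⟩ := hdet
  set α := (M 0 0).re
  set δ := (M 1 1).re
  set β₁ := (M 0 1).re
  set β₂ := (M 0 1).im
  rcases hα.eq_or_lt with hα0 | hαpos
  · rw [← hα0] at hdet ⊢
    have hβ₁ : β₁ = 0 := by nlinarith [sq_nonneg β₂]
    have hβ₂ : β₂ = 0 := by nlinarith [sq_nonneg β₁]
    rw [hβ₁, hβ₂]
    nlinarith [mul_nonneg hδ (sq_nonneg (x 1).re), mul_nonneg hδ (sq_nonneg (x 1).im)]
  · -- `α · x⋆Mx = |α x₀ + β x₁|² + det M · |x₁|²`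
    refine nonneg_of_mul_nonneg_right ?_ hαpos
    nlinarith [sq_nonneg (α * (x 0).re + β₁ * (x 1).re - β₂ * (x 1).im),
      sq_nonneg (α * (x 0).im + β₁ * (x 1).im + β₂ * (x 1).re),
      mul_nonneg (sub_nonneg.2 hdet) (add_nonneg (sq_nonneg (x 1).re) (sq_nonneg (x 1).im))]

def blochMatrix (c : ℝ) (v : Fin 3 → ℝ) : Matrix (Fin 2) (Fin 2) ℂ :=
  (c : ℂ) • 1 + ∑ k, (v k : ℂ) • pauli k

lemma blochMatrix_eq (c : ℝ) (v : Fin 3 → ℝ) :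
    blochMatrix c v =
      !![(c : ℂ) + v 2, (v 0 : ℂ) - v 1 * Complex.I;
        (v 0 : ℂ) + v 1 * Complex.I, (c : ℂ) - v 2] := by
  ext i j
  fin_cases i <;> fin_cases j <;> simp [blochMatrix, pauli, Fin.sum_univ_three] <;> ring

lemma posSemidef_blochMatrix {c : ℝ} {v : Fin 3 → ℝ} (hc : 0 ≤ c) (hv : ∑ k, v k ^ 2 ≤ c ^ 2) :
    (blochMatrix c v).PosSemidef := by
  obtain ⟨hv₂l, hv₂r⟩ : -c ≤ v 2 ∧ v 2 ≤ c := by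
    rw [← abs_le]
    refine abs_le_of_sq_le_sq ?_ hc
    simp only [Fin.sum_univ_three] at hv
    nlinarith [sq_nonneg (v 0), sq_nonneg (v 1)]
  rw [blochMatrix_eq]
  refine posSemidef_of_fin_two ?_ ?_ ?_ ?_
  · ext i j
    fin_cases i <;> fin_cases j <;> simp [Complex.ext_iff]
  · simp only [of_apply, cons_val', cons_val_zero, cons_val_fin_one]
    exact_mod_cast (by linarith : 0 ≤ c + v 2)
  · simpa using hv₂r
  · have hdet : ((c : ℂ) + v 2) * ((c : ℂ) - v 2)
        - ((v 0 : ℂ) - v 1 * Complex.I) * ((v 0 : ℂ) + v 1 * Complex.I)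
        = ((c ^ 2 - ∑ k, v k ^ 2 : ℝ) : ℂ) := by
      push_cast
      simp only [Fin.sum_univ_three]
      linear_combination (v 1 : ℂ) ^ 2 * Complex.I_sq
    rw [det_fin_two_of, hdet]
    exact Complex.zero_le_real.2 (sub_nonneg.2 hv)

lemma sum_mul_mul_cross_sq (q u w : Fin 3 → ℝ) :
    ∑ l, q (l + 1) * q (l + 2) * (u ⨯₃ w) l ^ 2 =
      (∑ k, q k * u k ^ 2) * (∑ k, q k * w k ^ 2) - (∑ k, q k * u k * w k) ^ 2 := by
  simp only [cross_apply, Fin.sum_univ_three, Fin.isValue, Fin.reduceAdd, cons_val_zero,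
    cons_val_one, cons_val]
  ring

lemma sum_sq_mul_cross_le {q e u w : Fin 3 → ℝ} (he : ∀ l, e l ^ 2 ≤ q (l + 1) * q (l + 2)) :
    ∑ l, (2 * e l * (u ⨯₃ w) l) ^ 2 ≤ (∑ k, q k * (u k ^ 2 + w k ^ 2)) ^ 2 := by
  set A := ∑ k, q k * u k ^ 2
  set B := ∑ k, q k * w k ^ 2
  calc ∑ l, (2 * e l * (u ⨯₃ w) l) ^ 2 = 4 * ∑ l, e l ^ 2 * (u ⨯₃ w) l ^ 2 := by
        rw [Finset.mul_sum]; congr! 1 with l; ring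
    _ ≤ 4 * ∑ l, q (l + 1) * q (l + 2) * (u ⨯₃ w) l ^ 2 := by gcongr with l; exact he l
    _ = 4 * (A * B - (∑ k, q k * u k * w k) ^ 2) := by rw [sum_mul_mul_cross_sq]
    _ ≤ (A + B) ^ 2 := by nlinarith [sq_nonneg (A - B), sq_nonneg (∑ k, q k * u k * w k)]
    _ = (∑ k, q k * (u k ^ 2 + w k ^ 2)) ^ 2 := by
        simp only [A, B, ← Finset.sum_add_distrib, mul_add]

lemma phiP_mul_conjTranspose_sub_eq_blochMatrix (p : Fin 3 → ℝ) (X : Matrix (Fin 2) (Fin 2) ℂ)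
    {u w : Fin 3 → ℝ} (hX : ∀ k, (pauli k * X).trace / 2 = u k + w k * Complex.I) :
    PhiP p (X * Xᴴ) - PhiP p X * PhiP p Xᴴ =
      blochMatrix (∑ k, (1 - p k ^ 2) * (u k ^ 2 + w k ^ 2))
        (fun l => 2 * (p l - p (l + 1) * p (l + 2)) * (u ⨯₃ w) l) := by
  have htr₀ := hX 0
  have htr₁ := hX 1
  have htr₂ := hX 2
  simp only [pauli, Matrix.trace_fin_two, Matrix.mul_apply, Fin.sum_univ_two, of_apply, cons_val',
    cons_val_zero, cons_val_one, cons_val_fin_one, zero_mul, one_mul, zero_add, add_zero,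
    neg_mul] at htr₀ htr₁ htr₂
  have hX01 : X 0 1 = (u 0 + w 1 : ℝ) + (w 0 - u 1 : ℝ) * Complex.I := by
    push_cast
    linear_combination htr₀ - Complex.I * htr₁ + ((X 0 1 - X 1 0) / 2 - w 1) * Complex.I_sq
  have hX10 : X 1 0 = (u 0 - w 1 : ℝ) + (w 0 + u 1 : ℝ) * Complex.I := by
    push_cast
    linear_combination htr₀ + Complex.I * htr₁ + ((X 1 0 - X 0 1) / 2 + w 1) * Complex.I_sq
  -- only the traceless part of `X` enters, so `X 1 1` is left free
  have hX00 : X 0 0 = X 1 1 + (2 * u 2 : ℝ) + (2 * w 2 : ℝ) * Complex.I := by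
    push_cast
    linear_combination 2 * htr₂
  rw [blochMatrix_eq]
  ext i j
  fin_cases i <;> fin_cases j <;>
    simp [PhiP, pauli, Matrix.trace_fin_two, Fin.sum_univ_three, Fin.sum_univ_two,
      Matrix.mul_apply, Matrix.one_apply, cross_apply, hX01, hX10, hX00] <;>
    apply Complex.ext <;> simp [sq] <;> ring

/-- if `|pₖ| ≤ 1` and `p₁² + p₂² + p₃² ≤ 1 + 2 p₁ p₂ p₃`, then `Φ_p`
satisfies the Kadison–Schwarz inequality. -/
theorem stmt_4 (p : Fin 3 → ℝ) (h1 : ∀ k, |p k| ≤ 1)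
    (h2 : p 0 ^ 2 + p 1 ^ 2 + p 2 ^ 2 ≤ 1 + 2 * p 0 * p 1 * p 2) :
    ∀ X : Matrix (Fin 2) (Fin 2) ℂ,
      (PhiP p (X * Xᴴ) - PhiP p X * PhiP p Xᴴ).PosSemidef := by
  intro X
  -- `(1 - b²)(1 - c²) - (a - bc)² = 1 + 2abc - a² - b² - c²` for every cyclic relabelling
  have hcoeff (l : Fin 3) :
      (p l - p (l + 1) * p (l + 2)) ^ 2 ≤ (1 - p (l + 1) ^ 2) * (1 - p (l + 2) ^ 2) := by
    fin_cases l <;>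
      simp only [Fin.zero_eta, Fin.mk_one, Fin.reduceFinMk, Fin.isValue, Fin.reduceAdd,
        zero_add] <;>
      linarith
  rw [phiP_mul_conjTranspose_sub_eq_blochMatrix p X fun k => (Complex.re_add_im _).symm]
  refine posSemidef_blochMatrix (Finset.sum_nonneg fun k _ => ?_) (sum_sq_mul_cross_le hcoeff)
  exact mul_nonneg (sub_nonneg.2 ((sq_le_one_iff_abs_le_one _).2 (h1 k))) (by positivity)
end

section
/- Let Φ : Mₙ(ℂ) → Mₙ(ℂ) be a positive unital linear map, and let X ∈ Mₙ(ℂ) be a normal matrix (X Xᴴ = Xᴴ X). Then Φ(X Xᴴ) − Φ(X) Φ(Xᴴ) is positive semidefinite. -/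
open Matrix
open scoped ComplexOrder

/-!
A normal element `a` with finite spectrum is the combination `a = ∑ μ • P μ` of its spectral
projections `P μ = 1_{μ}(a)`, which are positive and sum to `1`; likewise
`star a = ∑ star μ • P μ` and `a * star a = ∑ |μ|² • P μ`. Their images `Q μ = Φ (P μ)` are again
positive and sum to `1`, so with `b = Φ a = ∑ μ • Q μ` one gets
`Φ (a * star a) - b * star b = ∑ (μ - b) * Q μ * star (μ - b)`, a sum of positive elements.
-/

section SpectralProjection

variable {A : Type*} [Ring A] [StarRing A] [TopologicalSpace A] [Algebra ℂ A]
  [ContinuousFunctionalCalculus ℂ A IsStarNormal]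

noncomputable def spectralProjection (a : A) (μ : ℂ) : A :=
  cfc (fun z : ℂ => if z = μ then (1 : ℂ) else 0) a

lemma spectralProjection_nonneg [PartialOrder A] [StarOrderedRing A] (a : A) (μ : ℂ) :
    0 ≤ spectralProjection a μ :=
  cfc_nonneg fun z _ => by split_ifs <;> simp

lemma cfc_eq_sum_smul_spectralProjection {a : A} (hfin : (spectrum ℂ a).Finite) (f : ℂ → ℂ) :
    cfc f a = ∑ μ ∈ hfin.toFinset, f μ • spectralProjection a μ := by
  have hcont (g : ℂ → ℂ) : ContinuousOn g (spectrum ℂ a) := hfin.continuousOn g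
  calc cfc f a = cfc (∑ μ ∈ hfin.toFinset, fun z => f μ * if z = μ then (1 : ℂ) else 0) a := by
        refine cfc_congr fun z hz => ?_
        simp [hfin.mem_toFinset.mpr hz]
    _ = ∑ μ ∈ hfin.toFinset, f μ • spectralProjection a μ := by
        rw [cfc_sum _ _ _ fun _ _ => hcont _]
        exact Finset.sum_congr rfl fun μ _ => cfc_const_mul _ _ _ (hcont _)

lemma sum_spectralProjection {a : A} [IsStarNormal a] (hfin : (spectrum ℂ a).Finite) :
    ∑ μ ∈ hfin.toFinset, spectralProjection a μ = 1 := by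
  simpa using (cfc_eq_sum_smul_spectralProjection hfin 1).symm.trans (cfc_one ℂ a)

end SpectralProjection

section StarOrderedAlgebra

variable {B : Type*} [Ring B] [StarRing B] [PartialOrder B] [StarOrderedRing B] [Algebra ℂ B]
  [StarModule ℂ B] {ι : Type*} (s : Finset ι) {q : ι → B}

lemma star_sum_smul_of_nonneg (hq : ∀ i ∈ s, 0 ≤ q i) (c : ι → ℂ) :
    star (∑ i ∈ s, c i • q i) = ∑ i ∈ s, star (c i) • q i := by
  simp only [star_sum, star_smul]
  exact Finset.sum_congr rfl fun i hi => by rw [(hq i hi).isSelfAdjoint.star_eq]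

lemma sum_smul_mul_star_le_sum (hq : ∀ i ∈ s, 0 ≤ q i) (hsum : ∑ i ∈ s, q i = 1) (c : ι → ℂ) :
    (∑ i ∈ s, c i • q i) * star (∑ i ∈ s, c i • q i) ≤ ∑ i ∈ s, (c i * star (c i)) • q i := by
  set b := ∑ i ∈ s, c i • q i
  have hterm (i : ι) : (c i • 1 - b) * q i * star (c i • 1 - b) =
      (c i * star (c i)) • q i - c i • (q i * star b) - star (c i) • (b * q i) +
        b * q i * star b := by
    simp only [star_sub, star_smul, star_one, sub_mul, mul_sub, smul_mul_assoc, mul_smul_comm,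
      one_mul, mul_one, smul_sub, smul_smul, mul_comm (star (c i))]
    abel
  have hleft : ∑ i ∈ s, c i • (q i * star b) = b * star b := by
    simp only [← smul_mul_assoc, ← Finset.sum_mul, b]
  have hright : ∑ i ∈ s, star (c i) • (b * q i) = b * star b := by
    simp only [← mul_smul_comm, ← Finset.mul_sum, star_sum_smul_of_nonneg s hq, b]
  have hmid : ∑ i ∈ s, b * q i * star b = b * star b := by
    rw [← Finset.sum_mul, ← Finset.mul_sum, hsum, mul_one]
  have hdiff : ∑ i ∈ s, (c i * star (c i)) • q i - b * star b =
      ∑ i ∈ s, (c i • 1 - b) * q i * star (c i • 1 - b) := by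
    simp only [hterm, Finset.sum_add_distrib, Finset.sum_sub_distrib, hleft, hright, hmid]
    abel
  rw [← sub_nonneg, hdiff]
  exact Finset.sum_nonneg fun i hi => star_right_conjugate_nonneg (hq i hi) _

end StarOrderedAlgebra

theorem map_mul_map_star_le_map_mul_star {A B : Type*} [Ring A] [StarRing A] [TopologicalSpace A]
    [Algebra ℂ A] [ContinuousFunctionalCalculus ℂ A IsStarNormal] [PartialOrder A]
    [StarOrderedRing A] [Ring B] [StarRing B] [PartialOrder B] [StarOrderedRing B] [Algebra ℂ B]
    [StarModule ℂ B] (Φ : A →ₗ[ℂ] B) (hunital : Φ 1 = 1) (hpos : ∀ x, 0 ≤ x → 0 ≤ Φ x)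
    {a : A} [IsStarNormal a] (hfin : (spectrum ℂ a).Finite) :
    Φ a * Φ (star a) ≤ Φ (a * star a) := by
  set s := hfin.toFinset
  set Q := fun μ => Φ (spectralProjection a μ)
  have hQ : ∀ μ ∈ s, 0 ≤ Q μ := fun μ _ => hpos _ (spectralProjection_nonneg a μ)
  have hQsum : ∑ μ ∈ s, Q μ = 1 := by rw [← map_sum, sum_spectralProjection hfin, hunital]
  have hΦcfc (f : ℂ → ℂ) : Φ (cfc f a) = ∑ μ ∈ s, f μ • Q μ := by
    simp only [cfc_eq_sum_smul_spectralProjection hfin, map_sum, map_smul, Q, s]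
  have hΦa : Φ a = ∑ μ ∈ s, μ • Q μ := by simpa only [cfc_id' ℂ a] using hΦcfc fun z => z
  have hΦstar : Φ (star a) = star (Φ a) := by
    rw [hΦa, star_sum_smul_of_nonneg s hQ, ← hΦcfc, cfc_star_id (a := a)]
  have hΦmul : Φ (a * star a) = ∑ μ ∈ s, (μ * star μ) • Q μ := by
    rw [← hΦcfc, cfc_mul _ _ _ (hfin.continuousOn _) (hfin.continuousOn _), cfc_id' ℂ a,
      cfc_star_id (a := a)]
  rw [hΦstar, hΦmul, hΦa]
  exact sum_smul_mul_star_le_sum s hQ hQsum id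

/-- a positive unital linear map `Φ` on `Mₙ(ℂ)` satisfies the
Kadison–Schwarz inequality at every normal matrix `X`. -/
theorem stmt_11 (n : ℕ)
    (Φ : Matrix (Fin n) (Fin n) ℂ →ₗ[ℂ] Matrix (Fin n) (Fin n) ℂ)
    (hunital : Φ 1 = 1)
    (hpos : ∀ A : Matrix (Fin n) (Fin n) ℂ, A.PosSemidef → (Φ A).PosSemidef)
    (X : Matrix (Fin n) (Fin n) ℂ) (hX : X * Xᴴ = Xᴴ * X) :
    (Φ (X * Xᴴ) - Φ X * Φ Xᴴ).PosSemidef := by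
  have : IsStarNormal X := ⟨hX.symm⟩
  -- the L² operator norm makes `Mₙ(ℂ)` a C⋆-algebra, hence gives the functional calculus of `X`
  open scoped Matrix.Norms.L2Operator MatrixOrder in
  exact Matrix.le_iff.mp <| map_mul_map_star_le_map_mul_star Φ hunital
    (fun A hA => (hpos A hA.posSemidef).nonneg) (Matrix.finite_spectrum X)
end
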